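/- arXiv:1909.11350 — 2 statements merged into one kernel-verified Lean document; each statement's English description precedes it below -/
import Mathlib

section
/- (Truth Lemma) Let Φ be a finite closed set of formulas of L₁. For every formula E ∈ Φ and every state z of the canonical model M_Φ: E ∈ z_in if and only if z ⊨ E in M_Φ. -/
/-- Formulas of the language L₁. `ldiv A B` is A∖B, `rdiv B A` is B/A,
`ildiv A B` is A∖∖B (iterative left division), `irdiv B A` is B//A. -/
inductive Fm : Type where
  | var : ℕ → Fm
  | top : Fm
  | bot : Fm
  | and : Fm → Fm → Fm
  | or : Fm → Fm → Fm
  | prod : Fm → Fm → Fm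
  | ldiv : Fm → Fm → Fm
  | rdiv : Fm → Fm → Fm
  | ildiv : Fm → Fm → Fm
  | irdiv : Fm → Fm → Fm

/-- A Došen model on the set of states `S`: a ternary relation and a valuation. -/
structure DosenModel (S : Type*) where
  R : S → S → S → Prop
  V : ℕ → Set S

/-- `Rleft R x̄ s t` is the relation R⃖x̄ s t for a path x̄ (nonempty list). -/
def Rleft {S : Type*} (R : S → S → S → Prop) : List S → S → S → Prop
  | [], _, _ => False
  | [x], s, t => R x s t
  | x :: y :: xs, s, t => ∃ z, R x s z ∧ Rleft R (y :: xs) z t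

/-- `Rright R s x̄ t` is the relation R s x̄⃗ t for a path x̄ (nonempty list). -/
def Rright {S : Type*} (R : S → S → S → Prop) : S → List S → S → Prop
  | _, [], _ => False
  | s, [x], t => R s x t
  | s, x :: y :: xs, t => ∃ z, R s x z ∧ Rright R z (y :: xs) t

/-- Satisfaction: `sat M A s` means s ⊨ A in the model M. -/
def sat {S : Type*} (M : DosenModel S) : Fm → S → Prop
  | .var p, s => s ∈ M.V p
  | .top, _ => True
  | .bot, _ => False
  | .and A B, s => sat M A s ∧ sat M B s
  | .or A B, s => sat M A s ∨ sat M B s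
  | .prod A B, s => ∃ t u, M.R t u s ∧ sat M A t ∧ sat M B u
  | .ldiv A B, s => ∀ t u, M.R t s u → sat M A t → sat M B u
  | .rdiv B A, s => ∀ t u, M.R s t u → sat M A t → sat M B u
  | .ildiv A B, s =>
      ∀ (xs : List S) (t : S), xs ≠ [] → Rleft M.R xs s t → (∀ x ∈ xs, sat M A x) → sat M B t
  | .irdiv B A, s =>
      ∀ (xs : List S) (t : S), xs ≠ [] → Rright M.R s xs t → (∀ x ∈ xs, sat M A x) → sat M B t

/-- Validity of the sequent A ⊢ B in a model. -/
def valid {S : Type*} (M : DosenModel S) (A B : Fm) : Prop :=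
  ∀ s, sat M A s → sat M B s

/-- `ldivN A B n` is A∖ⁿB (meaningful for n ≥ 1): A∖¹B = A∖B, A∖ⁿ⁺¹B = A∖(A∖ⁿB). -/
def ldivN (A B : Fm) : ℕ → Fm
  | 0 => B
  | n + 1 => .ldiv A (ldivN A B n)

/-- `rdivN B A n` is B/ⁿA (meaningful for n ≥ 1): B/¹A = B/A, B/ⁿ⁺¹A = (B/ⁿA)/A. -/
def rdivN (B A : Fm) : ℕ → Fm
  | 0 => B
  | n + 1 => .rdiv (rdivN B A n) A

/-- `RIter R n` is the relation Rⁿ⁺¹ of the paper: R¹ = R,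
R^{n+1} s t u iff ∃ x y, R s y u ∧ Rⁿ x t y. -/
def RIter {S : Type*} (R : S → S → S → Prop) : ℕ → S → S → S → Prop
  | 0, s, t, u => R s t u
  | n + 1, s, t, u => ∃ x y, R s y u ∧ RIter R n x t y

/-- The left transitive closure R⁺ˡ = ⋃_{n ≥ 1} Rⁿ. -/
def RplusL {S : Type*} (R : S → S → S → Prop) (s t u : S) : Prop :=
  ∃ n, RIter R n s t u

/-- Provability in the axiom system IDFNL. `Prov A B` means A ⟶ B. -/
inductive Prov : Fm → Fm → Prop
  | id (A : Fm) : Prov A A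
  | top (A : Fm) : Prov A .top
  | bot (A : Fm) : Prov .bot A
  | andE1 (A B : Fm) : Prov (A.and B) A
  | andE2 (A B : Fm) : Prov (A.and B) B
  | orI1 (A B : Fm) : Prov A (A.or B)
  | orI2 (A B : Fm) : Prov B (A.or B)
  | distrib (A B C : Fm) : Prov (A.and (B.or C)) ((A.and B).or (A.and C))
  | ildivAnd (A B C : Fm) : Prov ((A.ildiv B).and (A.ildiv C)) (A.ildiv (B.and C))
  | ildivUnfold (A B : Fm) : Prov (A.ildiv B) ((A.ldiv B).and (A.ldiv (A.ildiv B)))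
  | ildivFold (A B : Fm) : Prov ((A.ldiv B).and (A.ldiv (A.ildiv B))) (A.ildiv B)
  | irdivAnd (A B C : Fm) : Prov ((B.irdiv A).and (C.irdiv A)) ((B.and C).irdiv A)
  | irdivUnfold (A B : Fm) : Prov (B.irdiv A) ((B.rdiv A).and ((B.irdiv A).rdiv A))
  | irdivFold (A B : Fm) : Prov (((B.irdiv A).rdiv A).and (B.rdiv A)) (B.irdiv A)
  | resL1 {A B C : Fm} : Prov (A.prod B) C → Prov B (A.ldiv C)
  | resL2 {A B C : Fm} : Prov B (A.ldiv C) → Prov (A.prod B) C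
  | resR1 {A B C : Fm} : Prov (A.prod B) C → Prov A (C.rdiv B)
  | resR2 {A B C : Fm} : Prov A (C.rdiv B) → Prov (A.prod B) C
  | andI {A B C : Fm} : Prov A B → Prov A C → Prov A (B.and C)
  | orE {A B C : Fm} : Prov A C → Prov B C → Prov (A.or B) C
  | cut {A B C : Fm} : Prov A B → Prov B C → Prov A C
  | ildivMono {A B C D : Fm} : Prov A B → Prov C D → Prov (B.ildiv C) (A.ildiv D)
  | irdivMono {A B C D : Fm} : Prov A B → Prov C D → Prov (C.irdiv B) (D.irdiv A)
  | ildivInd {A B : Fm} : Prov A (B.ldiv A) → Prov A (B.ildiv A)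
  | irdivInd {A B : Fm} : Prov A (A.rdiv B) → Prov A (A.irdiv B)

/-- Conjunction of a finite list of formulas (⋀∅ = ⊤). -/
def bigAnd : List Fm → Fm
  | [] => .top
  | A :: As => A.and (bigAnd As)

/-- Disjunction of a finite list of formulas (⋁∅ = ⊥). -/
def bigOr : List Fm → Fm
  | [] => .bot
  | A :: As => A.or (bigOr As)

/-- An independent IDFNL-pair: no finite Γ′ ⊆ Γ, Δ′ ⊆ Δ with ⋀Γ′ ⟶ ⋁Δ′. -/
def IndepPair (Γ Δ : Set Fm) : Prop :=
  ¬ ∃ (γ δ : List Fm), (∀ A ∈ γ, A ∈ Γ) ∧ (∀ A ∈ δ, A ∈ Δ) ∧ Prov (bigAnd γ) (bigOr δ)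

/-- A prime IDFNL-theory. -/
def PrimeTheory (T : Set Fm) : Prop :=
  (∀ A B, A ∈ T → B ∈ T → A.and B ∈ T) ∧
  (∀ A B, A ∈ T → Prov A B → B ∈ T) ∧
  (∀ A B, A.or B ∈ T → A ∈ T ∨ B ∈ T)

/-- Membership in the closure of a set of formulas Φ′: the smallest set
containing Φ′, ⊤, ⊥, closed under subformulas, and such that
A∖∖B ∈ Φ implies A∖B ∈ Φ and B//A ∈ Φ implies B/A ∈ Φ. -/
inductive Closure (Φ : Set Fm) : Fm → Prop
  | base {A : Fm} : A ∈ Φ → Closure Φ A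
  | top : Closure Φ .top
  | bot : Closure Φ .bot
  | andL {A B : Fm} : Closure Φ (A.and B) → Closure Φ A
  | andR {A B : Fm} : Closure Φ (A.and B) → Closure Φ B
  | orL {A B : Fm} : Closure Φ (A.or B) → Closure Φ A
  | orR {A B : Fm} : Closure Φ (A.or B) → Closure Φ B
  | prodL {A B : Fm} : Closure Φ (A.prod B) → Closure Φ A
  | prodR {A B : Fm} : Closure Φ (A.prod B) → Closure Φ B
  | ldivL {A B : Fm} : Closure Φ (A.ldiv B) → Closure Φ A
  | ldivR {A B : Fm} : Closure Φ (A.ldiv B) → Closure Φ B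
  | rdivL {A B : Fm} : Closure Φ (A.rdiv B) → Closure Φ A
  | rdivR {A B : Fm} : Closure Φ (A.rdiv B) → Closure Φ B
  | ildivL {A B : Fm} : Closure Φ (A.ildiv B) → Closure Φ A
  | ildivR {A B : Fm} : Closure Φ (A.ildiv B) → Closure Φ B
  | irdivL {A B : Fm} : Closure Φ (A.irdiv B) → Closure Φ A
  | irdivR {A B : Fm} : Closure Φ (A.irdiv B) → Closure Φ B
  | ildivDiv {A B : Fm} : Closure Φ (A.ildiv B) → Closure Φ (A.ldiv B)
  | irdivDiv {A B : Fm} : Closure Φ (B.irdiv A) → Closure Φ (B.rdiv A)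

/-- A set of formulas is closed iff it equals its own closure. -/
def ClosedSet (Φ : Set Fm) : Prop := {A | Closure Φ A} = Φ

/-- `entails Γ A`: ⋀Γ′ ⟶ A for some finite Γ′ ⊆ Γ. -/
def entails (Γ : Set Fm) (A : Fm) : Prop :=
  ∃ γ : List Fm, (∀ X ∈ γ, X ∈ Γ) ∧ Prov (bigAnd γ) A

/-- States of the canonical model over a (finite closed) set Φ:
independent IDFNL-pairs (a_in, a_out) with a_in ∪ a_out = Φ. -/
def CanState (Φ : Set Fm) : Type :=
  {a : Set Fm × Set Fm // IndepPair a.1 a.2 ∧ a.1 ∪ a.2 = Φ}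

/-- The canonical accessibility relation. -/
def canR (Φ : Set Fm) (a b c : CanState Φ) : Prop :=
  ∀ A B : Fm, A ∈ Φ → B ∈ Φ → entails a.1.1 A → entails b.1.1 (A.ldiv B) → entails c.1.1 B

/-- The canonical model M_Φ. -/
def canModel (Φ : Set Fm) : DosenModel (CanState Φ) :=
  ⟨canR Φ, fun p => {a | Fm.var p ∈ Φ ∧ Fm.var p ∈ a.1.1}⟩

/-!
For •, ∖ and / this is the usual canonical-model argument; the witnesses come from a
Lindenbaum lemma relative to the finite set Φ, which extends a finite subset of Φ avoiding an
ideal of the provability preorder to a state whose characteristic formula `⋀ z_in` still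
avoids it. For A∖∖B, finiteness of M_Φ lets a single formula X, the disjunction of the
characteristic formulas of the states satisfying A∖∖B, define that set of states. The
satisfaction clauses give X ⊢ A∖B and X ⊢ A∖X, so the induction rule of IDFNL yields
X ⊢ A∖∖B. The case of B//A is dual.
-/

namespace Prov

variable {A A' B B' C G X : Fm}

theorem prod_mono (h₁ : Prov A A') (h₂ : Prov B B') : Prov (A.prod B) (A'.prod B') :=
  resR2 (cut h₁ (resR1 (resL2 (cut h₂ (resL1 (id _))))))

theorem ldiv_mono (h₁ : Prov A' A) (h₂ : Prov B B') : Prov (A.ldiv B) (A'.ldiv B') :=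
  resL1 (cut (prod_mono h₁ (id _)) (cut (resL2 (id _)) h₂))

theorem rdiv_mono (h₁ : Prov B B') (h₂ : Prov A' A) : Prov (B.rdiv A) (B'.rdiv A') :=
  resR1 (cut (prod_mono (id _) h₂) (cut (resR2 (id _)) h₁))

theorem ldiv_and : Prov ((A.ldiv B).and (A.ldiv C)) (A.ldiv (B.and C)) :=
  resL1 (andI (resL2 (andE1 _ _)) (resL2 (andE2 _ _)))

theorem rdiv_and : Prov ((B.rdiv A).and (C.rdiv A)) ((B.and C).rdiv A) :=
  resR1 (andI (resR2 (andE1 _ _)) (resR2 (andE2 _ _)))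

theorem or_prod : Prov ((A.or B).prod C) ((A.prod C).or (B.prod C)) :=
  resR2 (orE (resR1 (orI1 _ _)) (resR1 (orI2 _ _)))

theorem prod_or : Prov (A.prod (B.or C)) ((A.prod B).or (A.prod C)) :=
  resL2 (orE (resL1 (orI1 _ _)) (resL1 (orI2 _ _)))

theorem bigAnd_of_mem {l : List Fm} (h : A ∈ l) : Prov (bigAnd l) A := by
  induction l with
  | nil => cases h
  | cons B l ih =>
    rcases List.mem_cons.1 h with rfl | h
    · exact andE1 _ _
    · exact cut (andE2 _ _) (ih h)

theorem bigAnd_iff {l : List Fm} : Prov G (bigAnd l) ↔ ∀ A ∈ l, Prov G A := by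
  refine ⟨fun h A hA => cut h (bigAnd_of_mem hA), fun h => ?_⟩
  induction l with
  | nil => exact top _
  | cons B l ih => exact andI (h B List.mem_cons_self) (ih fun A hA => h A (.tail _ hA))

theorem of_mem_bigOr {l : List Fm} (h : A ∈ l) : Prov A (bigOr l) := by
  induction l with
  | nil => cases h
  | cons B l ih =>
    rcases List.mem_cons.1 h with rfl | h
    · exact orI1 _ _
    · exact cut (ih h) (orI2 _ _)

theorem bigOr_iff {l : List Fm} : Prov (bigOr l) C ↔ ∀ A ∈ l, Prov A C := by
  refine ⟨fun h A hA => cut (of_mem_bigOr hA) h, fun h => ?_⟩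
  induction l with
  | nil => exact bot _
  | cons B l ih => exact orE (h B List.mem_cons_self) (ih fun A hA => h A (.tail _ hA))

theorem and_bigOr {l : List Fm} : Prov (G.and (bigOr l)) (bigOr (l.map G.and)) := by
  induction l with
  | nil => exact andE2 _ _
  | cons B l ih => exact cut (distrib _ _ _) (orE (orI1 _ _) (cut ih (orI2 _ _)))

/-- `B ∧ X` is a post-fixpoint of `A∖−`, so the induction rule applies to it. -/
theorem ildiv_of_ldiv (h₁ : Prov X (A.ldiv B)) (h₂ : Prov X (A.ldiv X)) :
    Prov X (A.ildiv B) := by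
  have hX : Prov X (A.ldiv (B.and X)) := cut (andI h₁ h₂) ldiv_and
  have hBX : Prov (B.and X) (A.ildiv B) :=
    cut (ildivInd (cut (andE2 _ _) hX)) (ildivMono (id A) (andE1 _ _))
  exact cut (andI h₁ (cut hX (ldiv_mono (id _) hBX))) (ildivFold _ _)

theorem irdiv_of_rdiv (h₁ : Prov X (B.rdiv A)) (h₂ : Prov X (X.rdiv A)) :
    Prov X (B.irdiv A) := by
  have hX : Prov X ((B.and X).rdiv A) := cut (andI h₁ h₂) rdiv_and
  have hBX : Prov (B.and X) (B.irdiv A) :=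
    cut (irdivInd (cut (andE2 _ _) hX)) (irdivMono (id A) (andE1 _ _))
  exact cut (andI (cut hX (rdiv_mono hBX (id _))) h₁) (irdivFold _ _)

end Prov

open Prov

noncomputable def conj (s : Finset Fm) : Fm := bigAnd s.toList

theorem prov_conj_iff {G : Fm} {s : Finset Fm} : Prov G (conj s) ↔ ∀ A ∈ s, Prov G A := by
  simp only [conj, Prov.bigAnd_iff, Finset.mem_toList]

theorem prov_conj_singleton (A : Fm) : Prov A (conj {A}) :=
  prov_conj_iff.2 fun _ h => Finset.mem_singleton.1 h ▸ Prov.id _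

theorem entails_coe_iff {s : Finset Fm} {G : Fm} : entails ↑s G ↔ Prov (conj s) G := by
  refine ⟨fun ⟨γ, hγ, h⟩ => cut (Prov.bigAnd_iff.2 fun A hA => ?_) h,
    fun h => ⟨s.toList, ?_, h⟩⟩
  · exact Prov.bigAnd_of_mem (Finset.mem_toList.2 (hγ A hA))
  · simp

theorem entails_of_mem {Γ : Set Fm} {A : Fm} (h : A ∈ Γ) : entails Γ A :=
  ⟨[A], by simpa using h, andE1 _ _⟩

theorem entails.cut {Γ : Set Fm} {A B : Fm} (h : entails Γ A) (hAB : Prov A B) : entails Γ B :=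
  let ⟨γ, hγ, hA⟩ := h
  ⟨γ, hγ, Prov.cut hA hAB⟩

theorem ClosedSet.mem {Φ : Set Fm} (hcl : ClosedSet Φ) {A : Fm} (h : Closure Φ A) : A ∈ Φ :=
  hcl ▸ h

structure IsProvIdeal (I : Fm → Prop) : Prop where
  of_prov {G H : Fm} : Prov G H → I H → I G
  bot : I .bot
  or {G H : Fm} : I G → I H → I (G.or H)

namespace IsProvIdeal

variable {I : Fm → Prop}

theorem bigOr_mem (hI : IsProvIdeal I) {δ : List Fm} (h : ∀ D ∈ δ, I D) : I (bigOr δ) := by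
  induction δ with
  | nil => exact hI.bot
  | cons D δ ih => exact hI.or (h D List.mem_cons_self) (ih fun D' hD' => h D' (.tail _ hD'))

theorem of_prov_bigOr (hI : IsProvIdeal I) {G : Fm} {δ : List Fm} (hG : Prov G (bigOr δ))
    (h : ∀ D ∈ δ, I (G.and D)) : I G :=
  hI.of_prov (cut (andI (Prov.id G) hG) and_bigOr) (hI.bigOr_mem (by simpa using h))

theorem principal (C : Fm) : IsProvIdeal (Prov · C) :=
  ⟨fun h h' => cut h h', Prov.bot C, orE⟩

theorem generatedBy (Δ : Set Fm) :
    IsProvIdeal fun G => ∃ δ : List Fm, (∀ D ∈ δ, D ∈ Δ) ∧ Prov G (bigOr δ) where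
  of_prov h := fun ⟨δ, hδ, hH⟩ => ⟨δ, hδ, cut h hH⟩
  bot := ⟨[], by simp, Prov.id _⟩
  or := fun ⟨δ₁, hδ₁, h₁⟩ ⟨δ₂, hδ₂, h₂⟩ => by
    refine ⟨δ₁ ++ δ₂, by simpa [or_imp, forall_and] using ⟨hδ₁, hδ₂⟩, orE ?_ ?_⟩
    · exact cut h₁ (Prov.bigOr_iff.2 fun A hA => of_mem_bigOr (List.mem_append_left _ hA))
    · exact cut h₂ (Prov.bigOr_iff.2 fun A hA => of_mem_bigOr (List.mem_append_right _ hA))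

theorem comap_prod_left (hI : IsProvIdeal I) (B : Fm) : IsProvIdeal (fun G => I (G.prod B)) where
  of_prov h := hI.of_prov (prod_mono h (Prov.id B))
  bot := hI.of_prov (resR2 (Prov.bot _)) hI.bot
  or hG hH := hI.of_prov or_prod (hI.or hG hH)

theorem comap_prod_right (hI : IsProvIdeal I) (A : Fm) : IsProvIdeal (fun G => I (A.prod G)) where
  of_prov h := hI.of_prov (prod_mono (Prov.id A) h)
  bot := hI.of_prov (resL2 (Prov.bot _)) hI.bot
  or hG hH := hI.of_prov prod_or (hI.or hG hH)

end IsProvIdeal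

namespace CanState

variable {Φ : Set Fm} (z : CanState Φ) {A B : Fm}

theorem in_subset : z.1.1 ⊆ Φ := fun _ h => z.2.2.subset (Or.inl h)

theorem out_subset : z.1.2 ⊆ Φ := fun _ h => z.2.2.subset (Or.inr h)

theorem not_entails_bigOr {δ : List Fm} (hδ : ∀ D ∈ δ, D ∈ z.1.2) :
    ¬ entails z.1.1 (bigOr δ) :=
  fun ⟨γ, hγ, h⟩ => z.2.1 ⟨γ, δ, hγ, hδ, h⟩

theorem not_entails_bot : ¬ entails z.1.1 .bot := z.not_entails_bigOr (δ := []) (by simp)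

theorem mem_out_of_not_mem (hA : A ∈ Φ) (h : A ∉ z.1.1) : A ∈ z.1.2 :=
  Or.resolve_left (z.2.2.symm.subset hA) h

theorem mem_of_entails (hA : A ∈ Φ) (h : entails z.1.1 A) : A ∈ z.1.1 := by
  by_contra hn
  exact z.not_entails_bigOr (δ := [A]) (by simpa using z.mem_out_of_not_mem hA hn)
    (h.cut (orI1 _ _))

theorem mem_and_iff (hA : A ∈ Φ) (hB : B ∈ Φ) (hAB : A.and B ∈ Φ) :
    A.and B ∈ z.1.1 ↔ A ∈ z.1.1 ∧ B ∈ z.1.1 := by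
  refine ⟨fun h => ⟨?_, ?_⟩,
    fun ⟨h₁, h₂⟩ => z.mem_of_entails hAB ⟨[A, B], ?_, ?_⟩⟩
  · exact z.mem_of_entails hA ((entails_of_mem h).cut (andE1 _ _))
  · exact z.mem_of_entails hB ((entails_of_mem h).cut (andE2 _ _))
  · simp [h₁, h₂]
  · exact andI (andE1 _ _) (cut (andE2 _ _) (andE1 _ _))

theorem mem_or_iff (hA : A ∈ Φ) (hB : B ∈ Φ) (hAB : A.or B ∈ Φ) :
    A.or B ∈ z.1.1 ↔ A ∈ z.1.1 ∨ B ∈ z.1.1 := by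
  refine ⟨fun h => ?_, fun h => z.mem_of_entails hAB ?_⟩
  · by_contra! hn
    refine z.not_entails_bigOr (δ := [A, B]) ?_ ((entails_of_mem h).cut ?_)
    · simp [z.mem_out_of_not_mem hA hn.1, z.mem_out_of_not_mem hB hn.2]
    · exact orE (of_mem_bigOr (by simp)) (of_mem_bigOr (by simp))
  · rcases h with h | h
    · exact (entails_of_mem h).cut (orI1 _ _)
    · exact (entails_of_mem h).cut (orI2 _ _)

noncomputable def charFormula (hfin : Φ.Finite) : Fm :=
  conj (hfin.subset z.in_subset).toFinset

theorem entails_iff_prov_charFormula (hfin : Φ.Finite) {G : Fm} :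
    entails z.1.1 G ↔ Prov (z.charFormula hfin) G := by
  rw [charFormula, ← entails_coe_iff, Set.Finite.coe_toFinset]

theorem finite (hfin : Φ.Finite) : Finite (CanState Φ) :=
  have : Finite ↥(𝒫 Φ ×ˢ 𝒫 Φ) :=
    (hfin.finite_subsets.prod hfin.finite_subsets).to_subtype
  Finite.of_injective (β := ↥(𝒫 Φ ×ˢ 𝒫 Φ))
    (fun z => ⟨z.1, z.in_subset, z.out_subset⟩) fun _ _ h => Subtype.ext (Subtype.mk.inj h)

end CanState

section Canonical

variable {Φ : Set Fm} {A B C : Fm}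

theorem mem_of_canR {a b c : CanState Φ} (h : canR Φ a b c) (hA : A ∈ a.1.1)
    (hAB : entails b.1.1 (A.ldiv B)) (hB : B ∈ Φ) : B ∈ c.1.1 :=
  c.mem_of_entails hB (h A B (a.in_subset hA) hB (entails_of_mem hA) hAB)

theorem canR_of_forall (hfin : Φ.Finite) {a b c : CanState Φ}
    (h : ∀ B ∈ Φ, Prov ((a.charFormula hfin).prod (b.charFormula hfin)) B → B ∈ c.1.1) :
    canR Φ a b c := by
  intro A B _ hB ha hb
  rw [a.entails_iff_prov_charFormula hfin] at ha
  rw [b.entails_iff_prov_charFormula hfin] at hb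
  exact entails_of_mem (h B hB (cut (prod_mono ha hb) (resL2 (Prov.id _))))

theorem exists_state_of_not_mem_ideal (hfin : Φ.Finite) {I : Fm → Prop} (hI : IsProvIdeal I)
    {s : Finset Fm} (hs : ↑s ⊆ Φ) (h : ¬ I (conj s)) :
    ∃ t : CanState Φ, ↑s ⊆ t.1.1 ∧ ¬ I (t.charFormula hfin) := by
  classical
  obtain ⟨m, hm, hm_max⟩ :=
    (hfin.toFinset.powerset.filter fun m => s ⊆ m ∧ ¬ I (conj m)).exists_maximal
      ⟨s, by simpa [Set.subset_def] using ⟨hs, h⟩⟩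
  simp only [Finset.mem_filter, Finset.mem_powerset, Set.Finite.subset_toFinset] at hm hm_max
  obtain ⟨hmΦ, hsm, hm⟩ := hm
  have hI_insert : ∀ D ∈ Φ, D ∉ m → I ((conj m).and D) := by
    intro D hD hDm
    by_contra hn
    refine hDm (hm_max ⟨?_, hsm.trans (Finset.subset_insert D m),
      fun hI' => hn (hI.of_prov ?_ hI')⟩ (Finset.subset_insert D m) (Finset.mem_insert_self D m))
    · simpa [Set.insert_subset_iff] using ⟨hD, hmΦ⟩
    · refine prov_conj_iff.2 fun A hA => ?_
      rcases Finset.mem_insert.1 hA with rfl | hA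
      · exact andE2 _ _
      · exact cut (andE1 _ _) (prov_conj_iff.1 (Prov.id _) A hA)
  have hindep : IndepPair ↑m (Φ \ ↑m) := fun ⟨γ, δ, hγ, hδ, hγδ⟩ =>
    hm (hI.of_prov_bigOr (entails_coe_iff.1 ⟨γ, hγ, hγδ⟩) fun D hD =>
      hI_insert D (hδ D hD).1 (hδ D hD).2)
  refine ⟨⟨(↑m, Φ \ ↑m), hindep, Set.union_sdiff_cancel hmΦ⟩, hsm, ?_⟩
  have hm_fin : (hfin.subset hmΦ).toFinset = m :=
    Finset.coe_injective (Set.Finite.coe_toFinset _)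
  simpa [CanState.charFormula, hm_fin] using hm

theorem exists_formula_defining (hfin : Φ.Finite) (P : CanState Φ → Prop) :
    ∃ X : Fm, (∀ w, P w → entails w.1.1 X) ∧
      ∀ C, (∀ w, P w → entails w.1.1 C) → Prov X C := by
  have := CanState.finite hfin
  refine ⟨bigOr ((Set.toFinite {w | P w}).toFinset.toList.map (·.charFormula hfin)),
    fun w hw => ?_, fun C hC => Prov.bigOr_iff.2 ?_⟩
  · exact (w.entails_iff_prov_charFormula hfin).2 (of_mem_bigOr (by simpa using ⟨w, hw, rfl⟩))
  · simpa using fun w hw => (w.entails_iff_prov_charFormula hfin).1 (hC w hw)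

theorem exists_canR_not_entails (hfin : Φ.Finite) (a b : CanState Φ)
    (h : ¬ Prov ((a.charFormula hfin).prod (b.charFormula hfin)) C) :
    ∃ c, canR Φ a b c ∧ ¬ entails c.1.1 C := by
  classical
  set s := hfin.toFinset.filter (Prov ((a.charFormula hfin).prod (b.charFormula hfin)))
  have hs : ↑s ⊆ Φ := fun B hB => hfin.mem_toFinset.1 (Finset.mem_filter.1 hB).1
  obtain ⟨c, hsc, hc⟩ := exists_state_of_not_mem_ideal hfin (IsProvIdeal.principal C) hs
    fun hsC => h (cut (prov_conj_iff.2 fun B hB => (Finset.mem_filter.1 hB).2) hsC)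
  refine ⟨c, canR_of_forall hfin fun B hB hab => hsc ?_,
    fun hcC => hc ((c.entails_iff_prov_charFormula hfin).1 hcC)⟩
  simp [s, hB, hab]

theorem exists_ldiv (hfin : Φ.Finite) {w : CanState Φ} (hA : A ∈ Φ)
    (h : ¬ entails w.1.1 (A.ldiv C)) :
    ∃ t u : CanState Φ, A ∈ t.1.1 ∧ canR Φ t w u ∧ ¬ entails u.1.1 C := by
  obtain ⟨t, hAt, ht⟩ := exists_state_of_not_mem_ideal hfin
    ((IsProvIdeal.principal C).comap_prod_left (w.charFormula hfin)) (s := {A}) (by simpa using hA)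
    fun hC => h ((w.entails_iff_prov_charFormula hfin).2
      (resL1 (cut (prod_mono (prov_conj_singleton A) (Prov.id _)) hC)))
  obtain ⟨u, hR, hu⟩ := exists_canR_not_entails hfin t w ht
  exact ⟨t, u, hAt (by simp), hR, hu⟩

theorem exists_rdiv (hfin : Φ.Finite) {w : CanState Φ} (hA : A ∈ Φ)
    (h : ¬ entails w.1.1 (C.rdiv A)) :
    ∃ t u : CanState Φ, A ∈ t.1.1 ∧ canR Φ w t u ∧ ¬ entails u.1.1 C := by
  obtain ⟨t, hAt, ht⟩ := exists_state_of_not_mem_ideal hfin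
    ((IsProvIdeal.principal C).comap_prod_right (w.charFormula hfin)) (s := {A}) (by simpa using hA)
    fun hC => h ((w.entails_iff_prov_charFormula hfin).2
      (resR1 (cut (prod_mono (Prov.id _) (prov_conj_singleton A)) hC)))
  obtain ⟨u, hR, hu⟩ := exists_canR_not_entails hfin w t ht
  exact ⟨t, u, hAt (by simp), hR, hu⟩

theorem exists_prod (hfin : Φ.Finite) {z : CanState Φ} (hA : A ∈ Φ) (hB : B ∈ Φ)
    (h : A.prod B ∈ z.1.1) :
    ∃ t u : CanState Φ, A ∈ t.1.1 ∧ B ∈ u.1.1 ∧ canR Φ t u z := by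
  have hI := IsProvIdeal.generatedBy z.1.2
  obtain ⟨t, hAt, ht⟩ := exists_state_of_not_mem_ideal hfin (hI.comap_prod_left B) (s := {A})
    (by simpa using hA) fun ⟨δ, hδ, hAδ⟩ => z.not_entails_bigOr hδ
      ((entails_of_mem h).cut (cut (prod_mono (prov_conj_singleton A) (Prov.id B)) hAδ))
  obtain ⟨u, hBu, hu⟩ := exists_state_of_not_mem_ideal hfin
    (hI.comap_prod_right (t.charFormula hfin)) (s := {B}) (by simpa using hB)
    fun hBδ => ht (hI.of_prov (prod_mono (Prov.id _) (prov_conj_singleton B)) hBδ)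
  refine ⟨t, u, hAt (by simp), hBu (by simp), canR_of_forall hfin fun B' hB' htu => ?_⟩
  by_contra hn
  exact hu ⟨[B'], by simpa using z.mem_out_of_not_mem hB' hn, cut htu (orI1 _ _)⟩

end Canonical

section Paths

variable {S : Type*} {R : S → S → S → Prop} {x s t z : S} {xs : List S}

theorem Rleft_cons (h : R x s z) (h' : Rleft R xs z t) : Rleft R (x :: xs) s t := by
  cases xs with
  | nil => exact h'.elim
  | cons y ys => exact ⟨z, h, h'⟩

theorem Rright_cons (h : R s x z) (h' : Rright R z xs t) : Rright R s (x :: xs) t := by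
  cases xs with
  | nil => exact h'.elim
  | cons y ys => exact ⟨z, h, h'⟩

theorem Rleft_invariant {P Inv Q : S → Prop}
    (step : ∀ {x s u}, R x s u → P x → Inv s → Inv u ∧ Q u) :
    ∀ {xs : List S} {s t : S}, Rleft R xs s t → (∀ x ∈ xs, P x) → Inv s → Q t
  | [], _, _, h, _, _ => h.elim
  | [_], _, _, h, hP, hs => (step h (hP _ List.mem_cons_self) hs).2
  | _ :: _ :: _, _, _, ⟨_, hz, h⟩, hP, hs =>
    Rleft_invariant step h (fun _ hx => hP _ (.tail _ hx)) (step hz (hP _ List.mem_cons_self) hs).1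

theorem Rright_invariant {P Inv Q : S → Prop}
    (step : ∀ {s x u}, R s x u → P x → Inv s → Inv u ∧ Q u) :
    ∀ {xs : List S} {s t : S}, Rright R s xs t → (∀ x ∈ xs, P x) → Inv s → Q t
  | [], _, _, h, _, _ => h.elim
  | [_], _, _, h, hP, hs => (step h (hP _ List.mem_cons_self) hs).2
  | _ :: _ :: _, _, _, ⟨_, hz, h⟩, hP, hs =>
    Rright_invariant step h (fun _ hx => hP _ (.tail _ hx)) (step hz (hP _ List.mem_cons_self) hs).1

variable {M : DosenModel S} {A B : Fm}

theorem sat_ldiv_of_sat_ildiv (h : sat M (A.ildiv B) s) : sat M (A.ldiv B) s :=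
  fun t u hR hA => h [t] u (List.cons_ne_nil _ _) hR (by simpa using hA)

theorem sat_ldiv_ildiv_of_sat_ildiv (h : sat M (A.ildiv B) s) : sat M (A.ldiv (A.ildiv B)) s :=
  fun _ _ hR hA _ _ _ hxs hall =>
    h _ _ (List.cons_ne_nil _ _) (Rleft_cons hR hxs) (List.forall_mem_cons.2 ⟨hA, hall⟩)

theorem sat_rdiv_of_sat_irdiv (h : sat M (B.irdiv A) s) : sat M (B.rdiv A) s :=
  fun t u hR hA => h [t] u (List.cons_ne_nil _ _) hR (by simpa using hA)

theorem sat_irdiv_rdiv_of_sat_irdiv (h : sat M (B.irdiv A) s) : sat M ((B.irdiv A).rdiv A) s :=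
  fun _ _ hR hA _ _ _ hxs hall =>
    h _ _ (List.cons_ne_nil _ _) (Rright_cons hR hxs) (List.forall_mem_cons.2 ⟨hA, hall⟩)

end Paths

def Truthful (Φ : Set Fm) (A : Fm) : Prop :=
  A ∈ Φ → ∀ z : CanState Φ, A ∈ z.1.1 ↔ sat (canModel Φ) A z

section TruthLemma

variable {Φ : Set Fm} {A B : Fm}

theorem truthful_and (hcl : ClosedSet Φ) (ihA : Truthful Φ A) (ihB : Truthful Φ B) :
    Truthful Φ (A.and B) := fun hAB z =>
  have hA := hcl.mem (.andL (.base hAB))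
  have hB := hcl.mem (.andR (.base hAB))
  (z.mem_and_iff hA hB hAB).trans (and_congr (ihA hA z) (ihB hB z))

theorem truthful_or (hcl : ClosedSet Φ) (ihA : Truthful Φ A) (ihB : Truthful Φ B) :
    Truthful Φ (A.or B) := fun hAB z =>
  have hA := hcl.mem (.orL (.base hAB))
  have hB := hcl.mem (.orR (.base hAB))
  (z.mem_or_iff hA hB hAB).trans (or_congr (ihA hA z) (ihB hB z))

theorem truthful_prod (hfin : Φ.Finite) (hcl : ClosedSet Φ) (ihA : Truthful Φ A)
    (ihB : Truthful Φ B) : Truthful Φ (A.prod B) := by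
  intro hAB z
  have hA := hcl.mem (.prodL (.base hAB))
  have hB := hcl.mem (.prodR (.base hAB))
  constructor
  · intro h
    obtain ⟨t, u, hAt, hBu, hR⟩ := exists_prod hfin hA hB h
    exact ⟨t, u, hR, (ihA hA t).1 hAt, (ihB hB u).1 hBu⟩
  · rintro ⟨t, u, hR, hAt, hBu⟩
    exact mem_of_canR hR ((ihA hA t).2 hAt)
      ((entails_of_mem ((ihB hB u).2 hBu)).cut (resL1 (Prov.id _))) hAB

theorem truthful_ldiv (hfin : Φ.Finite) (hcl : ClosedSet Φ) (ihA : Truthful Φ A)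
    (ihB : Truthful Φ B) : Truthful Φ (A.ldiv B) := by
  intro hAB z
  have hA := hcl.mem (.ldivL (.base hAB))
  have hB := hcl.mem (.ldivR (.base hAB))
  refine ⟨fun h t u hR hAt =>
      (ihB hB u).1 (mem_of_canR hR ((ihA hA t).2 hAt) (entails_of_mem h) hB),
    fun h => z.mem_of_entails hAB (by_contra fun hn => ?_)⟩
  obtain ⟨t, u, hAt, hR, hu⟩ := exists_ldiv hfin hA hn
  exact hu (entails_of_mem ((ihB hB u).2 (h t u hR ((ihA hA t).1 hAt))))

theorem truthful_rdiv (hfin : Φ.Finite) (hcl : ClosedSet Φ) (ihB : Truthful Φ B)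
    (ihA : Truthful Φ A) : Truthful Φ (B.rdiv A) := by
  intro hBA z
  have hA := hcl.mem (.rdivR (.base hBA))
  have hB := hcl.mem (.rdivL (.base hBA))
  refine ⟨fun h t u hR hAt => (ihB hB u).1 (mem_of_canR hR h ?_ hB),
    fun h => z.mem_of_entails hBA (by_contra fun hn => ?_)⟩
  · exact (entails_of_mem ((ihA hA t).2 hAt)).cut (resL1 (resR2 (Prov.id _)))
  obtain ⟨t, u, hAt, hR, hu⟩ := exists_rdiv hfin hA hn
  exact hu (entails_of_mem ((ihB hB u).2 (h t u hR ((ihA hA t).1 hAt))))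

theorem truthful_ildiv (hfin : Φ.Finite) (hcl : ClosedSet Φ) (ihA : Truthful Φ A)
    (ihB : Truthful Φ B) : Truthful Φ (A.ildiv B) := by
  intro hAB z
  have hA := hcl.mem (.ildivL (.base hAB))
  have hB := hcl.mem (.ildivR (.base hAB))
  have ihAB := truthful_ldiv hfin hcl ihA ihB (hcl.mem (.ildivDiv (.base hAB)))
  constructor
  · intro h xs t _ hR hxs
    refine (ihB hB t).1 (Rleft_invariant (Inv := (A.ildiv B ∈ ·.1.1))
      (Q := (B ∈ ·.1.1)) (fun hR hx hs => ⟨?_, ?_⟩)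
      hR (fun x hx => (ihA hA x).2 (hxs x hx)) h)
    · exact mem_of_canR hR hx ((entails_of_mem hs).cut (cut (ildivUnfold A B) (andE2 _ _))) hAB
    · exact mem_of_canR hR hx ((entails_of_mem hs).cut (cut (ildivUnfold A B) (andE1 _ _))) hB
  · intro h
    obtain ⟨X, hX, hX_prov⟩ := exists_formula_defining hfin (sat (canModel Φ) (A.ildiv B))
    have hXB : Prov X (A.ldiv B) :=
      hX_prov _ fun w hw => entails_of_mem ((ihAB w).2 (sat_ldiv_of_sat_ildiv hw))
    have hXX : Prov X (A.ldiv X) := hX_prov _ fun w hw => by_contra fun hn => by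
      obtain ⟨t, u, hAt, hR, hu⟩ := exists_ldiv hfin hA hn
      exact hu (hX u (sat_ldiv_ildiv_of_sat_ildiv hw t u hR ((ihA hA t).1 hAt)))
    exact z.mem_of_entails hAB ((hX z h).cut (Prov.ildiv_of_ldiv hXB hXX))

theorem truthful_irdiv (hfin : Φ.Finite) (hcl : ClosedSet Φ) (ihB : Truthful Φ B)
    (ihA : Truthful Φ A) : Truthful Φ (B.irdiv A) := by
  intro hBA z
  have hA := hcl.mem (.irdivR (.base hBA))
  have hB := hcl.mem (.irdivL (.base hBA))
  have ihBA := truthful_rdiv hfin hcl ihB ihA (hcl.mem (.irdivDiv (.base hBA)))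
  constructor
  · intro h xs t _ hR hxs
    refine (ihB hB t).1 (Rright_invariant (Inv := (B.irdiv A ∈ ·.1.1))
      (Q := (B ∈ ·.1.1)) (fun hR hx hs => ⟨?_, ?_⟩)
      hR (fun x hx => (ihA hA x).2 (hxs x hx)) h)
    · refine mem_of_canR hR hs ((entails_of_mem hx).cut (resL1 (resR2 ?_))) hBA
      exact cut (irdivUnfold A B) (andE2 _ _)
    · refine mem_of_canR hR hs ((entails_of_mem hx).cut (resL1 (resR2 ?_))) hB
      exact cut (irdivUnfold A B) (andE1 _ _)
  · intro h
    obtain ⟨X, hX, hX_prov⟩ := exists_formula_defining hfin (sat (canModel Φ) (B.irdiv A))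
    have hXB : Prov X (B.rdiv A) :=
      hX_prov _ fun w hw => entails_of_mem ((ihBA w).2 (sat_rdiv_of_sat_irdiv hw))
    have hXX : Prov X (X.rdiv A) := hX_prov _ fun w hw => by_contra fun hn => by
      obtain ⟨t, u, hAt, hR, hu⟩ := exists_rdiv hfin hA hn
      exact hu (hX u (sat_irdiv_rdiv_of_sat_irdiv hw t u hR ((ihA hA t).1 hAt)))
    exact z.mem_of_entails hBA ((hX z h).cut (Prov.irdiv_of_rdiv hXB hXX))

end TruthLemma

/-- Truth Lemma: for a finite closed set Φ, every E ∈ Φ and every state z of the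
canonical model M_Φ, E ∈ z_in iff z ⊨ E in M_Φ. -/
theorem truth_lemma (Φ : Set Fm) (hfin : Φ.Finite) (hcl : ClosedSet Φ)
    (E : Fm) (hE : E ∈ Φ) (z : CanState Φ) :
    E ∈ z.1.1 ↔ sat (canModel Φ) E z := by
  revert hE z
  induction E with
  | var p => exact fun hE z => ⟨fun h => ⟨hE, h⟩, And.right⟩
  | top => exact fun hE z => iff_of_true (z.mem_of_entails hE ⟨[], by simp, Prov.id _⟩) trivial
  | bot => exact fun _ z => iff_of_false (fun h => z.not_entails_bot (entails_of_mem h)) id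
  | and A B ihA ihB => exact truthful_and hcl ihA ihB
  | or A B ihA ihB => exact truthful_or hcl ihA ihB
  | prod A B ihA ihB => exact truthful_prod hfin hcl ihA ihB
  | ldiv A B ihA ihB => exact truthful_ldiv hfin hcl ihA ihB
  | rdiv B A ihB ihA => exact truthful_rdiv hfin hcl ihB ihA
  | ildiv A B ihA ihB => exact truthful_ildiv hfin hcl ihA ihB
  | irdiv B A ihB ihA => exact truthful_irdiv hfin hcl ihB ihA
end

section
/- (Soundness) Every sequent A ⊢ B provable in IDFNL is valid in every Došen frame. -/
/-!
Induction on derivations. All axioms and rules except those for `∖∖` and `//` are immediate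
from the satisfaction clauses. For the iterative divisions, peeling the first state off a path
shows that `A∖∖B` is equivalent to `A∖B ∧ A∖(A∖∖B)` (and dually for `//`), and the induction
rule holds because `A ⊢ B∖A` propagates `A` along every path of `B`-states.
-/

section Paths

variable {S : Type*} {R : S → S → S → Prop}

theorem Rleft_cons_of_ne_nil {x : S} {xs : List S} (h : xs ≠ []) {s t : S} :
    Rleft R (x :: xs) s t ↔ ∃ z, R x s z ∧ Rleft R xs z t := by
  cases xs with
  | nil => exact absurd rfl h
  | cons => exact Iff.rfl

theorem Rright_cons_of_ne_nil {x : S} {xs : List S} (h : xs ≠ []) {s t : S} :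
    Rright R s (x :: xs) t ↔ ∃ z, R s x z ∧ Rright R z xs t := by
  cases xs with
  | nil => exact absurd rfl h
  | cons => exact Iff.rfl

end Paths

namespace DosenModel

variable {S : Type*} (M : DosenModel S)

theorem sat_ildiv_iff {A B : Fm} {s : S} :
    sat M (A.ildiv B) s ↔ sat M (A.ldiv B) s ∧ sat M (A.ldiv (A.ildiv B)) s := by
  constructor
  · intro hs
    refine ⟨fun t u hR hA => hs [t] u (List.cons_ne_nil _ _) hR (by simpa using hA),
      fun t u hR hA xs w hne hR' hxs => ?_⟩
    exact hs (t :: xs) w (List.cons_ne_nil _ _) ((Rleft_cons_of_ne_nil hne).2 ⟨u, hR, hR'⟩)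
      (List.forall_mem_cons.2 ⟨hA, hxs⟩)
  · rintro ⟨hB, hstep⟩ xs t _ hR hA
    match xs, hR with
    | [x], hR => exact hB x t hR (hA x List.mem_cons_self)
    | x :: y :: ys, ⟨z, hxz, hzt⟩ =>
      exact hstep x z hxz (hA x List.mem_cons_self) (y :: ys) t (List.cons_ne_nil _ _) hzt
        (List.forall_mem_cons.1 hA).2

theorem sat_irdiv_iff {A B : Fm} {s : S} :
    sat M (B.irdiv A) s ↔ sat M (B.rdiv A) s ∧ sat M ((B.irdiv A).rdiv A) s := by
  constructor
  · intro hs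
    refine ⟨fun t u hR hA => hs [t] u (List.cons_ne_nil _ _) hR (by simpa using hA),
      fun t u hR hA xs w hne hR' hxs => ?_⟩
    exact hs (t :: xs) w (List.cons_ne_nil _ _) ((Rright_cons_of_ne_nil hne).2 ⟨u, hR, hR'⟩)
      (List.forall_mem_cons.2 ⟨hA, hxs⟩)
  · rintro ⟨hB, hstep⟩ xs t _ hR hA
    match xs, hR with
    | [x], hR => exact hB x t hR (hA x List.mem_cons_self)
    | x :: y :: ys, ⟨z, hxz, hzt⟩ =>
      exact hstep x z hxz (hA x List.mem_cons_self) (y :: ys) t (List.cons_ne_nil _ _) hzt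
        (List.forall_mem_cons.1 hA).2

theorem sat_of_Rleft {A B : Fm} (h : valid M A (B.ldiv A)) :
    ∀ {xs : List S} {s t : S}, Rleft M.R xs s t → sat M A s → (∀ x ∈ xs, sat M B x) →
      sat M A t
  | [x], _, _, hR, hs, hB => h _ hs x _ hR (hB x List.mem_cons_self)
  | x :: _ :: _, _, _, ⟨_, hxz, hzt⟩, hs, hB =>
    sat_of_Rleft h hzt (h _ hs x _ hxz (hB x List.mem_cons_self)) (List.forall_mem_cons.1 hB).2

theorem sat_of_Rright {A B : Fm} (h : valid M A (A.rdiv B)) :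
    ∀ {xs : List S} {s t : S}, Rright M.R s xs t → sat M A s → (∀ x ∈ xs, sat M B x) →
      sat M A t
  | [x], _, _, hR, hs, hB => h _ hs x _ hR (hB x List.mem_cons_self)
  | x :: _ :: _, _, _, ⟨_, hxz, hzt⟩, hs, hB =>
    sat_of_Rright h hzt (h _ hs x _ hxz (hB x List.mem_cons_self)) (List.forall_mem_cons.1 hB).2

variable {M}

theorem valid_ldiv_iff_valid_prod {A B C : Fm} :
    valid M B (A.ldiv C) ↔ valid M (A.prod B) C :=
  ⟨fun h _ ⟨t, u, hR, hA, hB⟩ => h u hB t _ hR hA,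
    fun h s hs t u hR hA => h u ⟨t, s, hR, hA, hs⟩⟩

theorem valid_rdiv_iff_valid_prod {A B C : Fm} :
    valid M A (C.rdiv B) ↔ valid M (A.prod B) C :=
  ⟨fun h _ ⟨t, u, hR, hA, hB⟩ => h t hA u _ hR hB,
    fun h s hs t u hR hB => h u ⟨s, t, hR, hs, hB⟩⟩

theorem valid_ildiv_mono {A B C D : Fm} (hAB : valid M A B) (hCD : valid M C D) :
    valid M (B.ildiv C) (A.ildiv D) :=
  fun _ hs xs t hne hR hA => hCD t (hs xs t hne hR fun x hx => hAB x (hA x hx))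

theorem valid_irdiv_mono {A B C D : Fm} (hAB : valid M A B) (hCD : valid M C D) :
    valid M (C.irdiv B) (D.irdiv A) :=
  fun _ hs xs t hne hR hA => hCD t (hs xs t hne hR fun x hx => hAB x (hA x hx))

theorem valid_ildiv_of_valid_ldiv {A B : Fm} (h : valid M A (B.ldiv A)) :
    valid M A (B.ildiv A) :=
  fun _ hs _ _ _ hR hB => sat_of_Rleft M h hR hs hB

theorem valid_irdiv_of_valid_rdiv {A B : Fm} (h : valid M A (A.rdiv B)) :
    valid M A (A.irdiv B) :=
  fun _ hs _ _ _ hR hB => sat_of_Rright M h hR hs hB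

end DosenModel

open DosenModel in
theorem soundness_general (A B : Fm) (h : Prov A B)
    (S : Type) (M : DosenModel S) : valid M A B := by
  induction h with
  | id => exact fun _ hs => hs
  | top => exact fun _ _ => trivial
  | bot => exact fun _ hs => hs.elim
  | andE1 => exact fun _ hs => hs.1
  | andE2 => exact fun _ hs => hs.2
  | orI1 => exact fun _ hs => Or.inl hs
  | orI2 => exact fun _ hs => Or.inr hs
  | distrib => exact fun _ ⟨ha, hbc⟩ => hbc.imp (And.intro ha) (And.intro ha)
  | ildivAnd => exact fun _ ⟨h₁, h₂⟩ xs t hne hR hA => ⟨h₁ xs t hne hR hA, h₂ xs t hne hR hA⟩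
  | ildivUnfold => exact fun _ => (sat_ildiv_iff M).1
  | ildivFold => exact fun _ => (sat_ildiv_iff M).2
  | irdivAnd => exact fun _ ⟨h₁, h₂⟩ xs t hne hR hA => ⟨h₁ xs t hne hR hA, h₂ xs t hne hR hA⟩
  | irdivUnfold => exact fun _ => (sat_irdiv_iff M).1
  | irdivFold => exact fun _ hs => (sat_irdiv_iff M).2 hs.symm
  | resL1 _ ih => exact valid_ldiv_iff_valid_prod.2 ih
  | resL2 _ ih => exact valid_ldiv_iff_valid_prod.1 ih
  | resR1 _ ih => exact valid_rdiv_iff_valid_prod.2 ih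
  | resR2 _ ih => exact valid_rdiv_iff_valid_prod.1 ih
  | andI _ _ ih₁ ih₂ => exact fun s hs => ⟨ih₁ s hs, ih₂ s hs⟩
  | orE _ _ ih₁ ih₂ => exact fun s hs => hs.elim (ih₁ s) (ih₂ s)
  | cut _ _ ih₁ ih₂ => exact fun s hs => ih₂ s (ih₁ s hs)
  | ildivMono _ _ ih₁ ih₂ => exact valid_ildiv_mono ih₁ ih₂
  | irdivMono _ _ ih₁ ih₂ => exact valid_irdiv_mono ih₁ ih₂
  | ildivInd _ ih => exact valid_ildiv_of_valid_ldiv ih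
  | irdivInd _ ih => exact valid_irdiv_of_valid_rdiv ih

/-- Soundness: every sequent provable in IDFNL is valid in every Došen frame. -/
theorem soundness (A B : Fm) (h : Prov A B)
    (S : Type) [Nonempty S] (M : DosenModel S) : valid M A B :=
  soundness_general A B h S M
end
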